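/- Let l ≥ 3 be a natural number and let x, y ∈ [1/l, 1] be real numbers. Then l(l-1)(x + y - 2xy) ≥ 2(l - 2 - l·x·y + x + y). -/

import Mathlib

/-! After clearing the common factor `l - 2`, the difference of the two sides is
`(l x - 1)(1 - y) + (l y - 1)(1 - x)`, a sum of two products of nonnegative factors on
`[1/l, 1]²`. -/

lemma quartet_gap_eq {R : Type*} [CommRing R] (l x y : R) :
    l * (l - 1) * (x + y - 2 * x * y) - 2 * (l - 2 - l * x * y + x + y) =
      (l - 2) * ((l * x - 1) * (1 - y) + (l * y - 1) * (1 - x)) := by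
  ring

lemma two_mul_quartet_le {R : Type*} [CommRing R] [PartialOrder R] [IsOrderedRing R]
    {l x y : R} (hl : 2 ≤ l) (hlx : 1 ≤ l * x) (hx : x ≤ 1)
    (hly : 1 ≤ l * y) (hy : y ≤ 1) :
    2 * (l - 2 - l * x * y + x + y) ≤ l * (l - 1) * (x + y - 2 * x * y) := by
  have hgap : 0 ≤ (l - 2) * ((l * x - 1) * (1 - y) + (l * y - 1) * (1 - x)) := by
    apply mul_nonneg (sub_nonneg.2 hl)
    apply add_nonneg <;> apply mul_nonneg <;> rwa [sub_nonneg]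
  rw [← quartet_gap_eq] at hgap
  exact sub_nonneg.1 hgap

theorem stmt_1 (l : ℕ) (hl : 3 ≤ l) (x y : ℝ)
    (hx : x ∈ Set.Icc (1 / (l : ℝ)) 1) (hy : y ∈ Set.Icc (1 / (l : ℝ)) 1) :
    (l : ℝ) * (l - 1) * (x + y - 2 * x * y) ≥
      2 * ((l : ℝ) - 2 - l * x * y + x + y) := by
  have hl3 : (3 : ℝ) ≤ l := by exact_mod_cast hl
  have hlpos : (0 : ℝ) < l := by linarith
  exact two_mul_quartet_le (by linarith) ((div_le_iff₀' hlpos).1 hx.1) hx.2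
    ((div_le_iff₀' hlpos).1 hy.1) hy.2
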